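/- arXiv:1311.3013 — 4 statements merged into one kernel-verified Lean document; each statement's English description precedes it below -/
import Mathlib

section
/- (Collapse theorem) Let T be a uniform L_{ω·ω}-theory. For any positive integer n and any L_{ω·ω}-formula φ with On(φ) ⊆ ω·n, T ⊨ φ if and only if T∩(ω·n) ⊨ φ. -/
namespace FCT

/-- Terms of the language `L_PA = (0, S, +, ·)`.  Variables are indexed by `ℕ`. -/
inductive Term : Type where
  | var : ℕ → Term
  | zero : Term
  | succ : Term → Term
  | add : Term → Term → Term
  | mul : Term → Term → Term

/-- Formulas of `L_PA` extended by a family of unary operators indexed by `Op`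
(the base logic).  `op K φ` is the formula `Kφ`. -/
inductive Formula (Op : Type) : Type where
  | eq : Term → Term → Formula Op
  | imp : Formula Op → Formula Op → Formula Op
  | not : Formula Op → Formula Op
  | all : ℕ → Formula Op → Formula Op
  | op : Op → Formula Op → Formula Op

/-- The ordinals below `ω·ω`, encoded as pairs: `(a, b)` represents `ω·a + b`,
with the lexicographic order. -/
abbrev Ord2 : Type := ℕ ×ₗ ℕ

/-- The ordinal `ω·a + b` as an element of `Ord2`. -/
def omul (a b : ℕ) : Ord2 := toLex (a, b)

/-- Formulas of `L_EA`: one operator `K`. -/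
abbrev LEA : Type := Formula Unit

/-- Formulas of `L_{ω·ω}`: operators `K^α` for `α < ω·ω`. -/
abbrev LOO : Type := Formula Ord2

/-- `Kφ` in `L_EA`. -/
def KK (φ : LEA) : LEA := .op () φ

/-- Variables occurring in a term. -/
def Term.vars : Term → Set ℕ
  | .var x => {x}
  | .zero => ∅
  | .succ t => t.vars
  | .add t u => t.vars ∪ u.vars
  | .mul t u => t.vars ∪ u.vars

/-- Free variables of a formula (`FV(Kφ) = FV(φ)`). -/
def Formula.free {Op : Type} : Formula Op → Set ℕ
  | .eq t u => t.vars ∪ u.vars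
  | .imp φ ψ => φ.free ∪ ψ.free
  | .not φ => φ.free
  | .all x φ => φ.free \ {x}
  | .op _ φ => φ.free

/-- A sentence is a formula with no free variables. -/
def Formula.IsSentence {Op : Type} (φ : Formula Op) : Prop := φ.free = ∅

/-- A theory is a set of sentences. -/
def IsTheory {Op : Type} (T : Set (Formula Op)) : Prop := ∀ φ ∈ T, φ.IsSentence

/-- Substitution of the term `u` for the variable `x` in a term. -/
def Term.subst (x : ℕ) (u : Term) : Term → Term
  | .var y => if y = x then u else .var y
  | .zero => .zero
  | .succ t => .succ (Term.subst x u t)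
  | .add t₁ t₂ => .add (Term.subst x u t₁) (Term.subst x u t₂)
  | .mul t₁ t₂ => .mul (Term.subst x u t₁) (Term.subst x u t₂)

/-- Substitution `φ(x|u)` of the term `u` for all free occurrences of `x` in `φ`. -/
def Formula.subst {Op : Type} (x : ℕ) (u : Term) : Formula Op → Formula Op
  | .eq t₁ t₂ => .eq (Term.subst x u t₁) (Term.subst x u t₂)
  | .imp φ ψ => .imp (Formula.subst x u φ) (Formula.subst x u ψ)
  | .not φ => .not (Formula.subst x u φ)
  | .all y φ => if y = x then .all y φ else .all y (Formula.subst x u φ)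
  | .op K φ => .op K (Formula.subst x u φ)

/-- The term `u` is substitutable for the variable `x` in the formula. -/
def Formula.Substitutable {Op : Type} (x : ℕ) (u : Term) : Formula Op → Prop
  | .eq _ _ => True
  | .imp φ ψ => φ.Substitutable x u ∧ ψ.Substitutable x u
  | .not φ => φ.Substitutable x u
  | .all y φ => x = y ∨ x ∉ φ.free ∨ (y ∉ u.vars ∧ φ.Substitutable x u)
  | .op _ φ => φ.Substitutable x u

/-- Matching of two variables relative to a list of pairs of renamed bound variables. -/
def varMatch : List (ℕ × ℕ) → ℕ → ℕ → Prop
  | [], x, y => x = y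
  | (a, b) :: ρ, x, y => (x = a ∧ y = b) ∨ (x ≠ a ∧ y ≠ b ∧ varMatch ρ x y)

/-- Alphabetic matching of terms relative to a list of pairs of renamed bound variables. -/
def Term.alpha (ρ : List (ℕ × ℕ)) : Term → Term → Prop
  | .var x, .var y => varMatch ρ x y
  | .zero, .zero => True
  | .succ t, .succ u => t.alpha ρ u
  | .add t₁ t₂, .add u₁ u₂ => t₁.alpha ρ u₁ ∧ t₂.alpha ρ u₂
  | .mul t₁ t₂, .mul u₁ u₂ => t₁.alpha ρ u₁ ∧ t₂.alpha ρ u₂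
  | _, _ => False

/-- Alphabetic matching of formulas relative to a list of pairs of renamed bound variables. -/
def Formula.alpha {Op : Type} (ρ : List (ℕ × ℕ)) : Formula Op → Formula Op → Prop
  | .eq t₁ t₂, .eq u₁ u₂ => t₁.alpha ρ u₁ ∧ t₂.alpha ρ u₂
  | .imp φ₁ φ₂, .imp ψ₁ ψ₂ => φ₁.alpha ρ ψ₁ ∧ φ₂.alpha ρ ψ₂
  | .not φ, .not ψ => φ.alpha ρ ψ
  | .all x φ, .all y ψ => φ.alpha ((x, y) :: ρ) ψ
  | .op K φ, .op K' ψ => K = K' ∧ φ.alpha ρ ψ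
  | _, _ => False

/-- `ψ` is an alphabetic variant of `φ`: it is obtained from `φ` by renaming
bound variables while respecting the binding of the quantifiers. -/
def Formula.AlphaVariant {Op : Type} (φ ψ : Formula Op) : Prop := φ.alpha [] ψ

/-- The data of a structure for the base logic over `L_PA` extended by the
operators `Op`: a first-order part together with a truth valuation
`opSat K φ s` ("`M ⊨ Kφ[s]`") for operator-prefixed formulas. -/
structure PreStruc (Op : Type) : Type 1 where
  U : Type
  zero : U
  succ : U → U
  add : U → U → U
  mul : U → U → U
  opSat : Op → Formula Op → (ℕ → U) → Prop

/-- Evaluation of terms. -/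
def Term.eval {Op : Type} (M : PreStruc Op) (s : ℕ → M.U) : Term → M.U
  | .var x => s x
  | .zero => M.zero
  | .succ t => M.succ (t.eval M s)
  | .add t u => M.add (t.eval M s) (u.eval M s)
  | .mul t u => M.mul (t.eval M s) (u.eval M s)

/-- Satisfaction `M ⊨ φ[s]`: as in first-order logic on non-operator formulas,
and given by `opSat` on operator-prefixed formulas. -/
def Sat {Op : Type} (M : PreStruc Op) : Formula Op → (ℕ → M.U) → Prop
  | .eq t u, s => t.eval M s = u.eval M s
  | .imp φ ψ, s => Sat M φ s → Sat M ψ s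
  | .not φ, s => ¬ Sat M φ s
  | .all x φ, s => ∀ a : M.U, Sat M φ (Function.update s x a)
  | .op K φ, s => M.opSat K φ s

/-- `M` is a genuine structure of the base logic: its operator valuation
(1) depends only on the values of the assignment on the free variables,
(2) is invariant under renaming of bound variables, and
(3) satisfies weak substitution. -/
def IsStruc {Op : Type} (M : PreStruc Op) : Prop :=
  (∀ (K : Op) (φ : Formula Op) (s t : ℕ → M.U),
      (∀ x ∈ φ.free, s x = t x) → (M.opSat K φ s ↔ M.opSat K φ t)) ∧
  (∀ (K : Op) (φ ψ : Formula Op) (s : ℕ → M.U),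
      φ.AlphaVariant ψ → (M.opSat K φ s ↔ M.opSat K ψ s)) ∧
  (∀ (K : Op) (φ : Formula Op) (x y : ℕ) (s : ℕ → M.U),
      φ.Substitutable x (.var y) →
      (M.opSat K (φ.subst x (.var y)) s ↔ M.opSat K φ (Function.update s x (s y))))

/-- A formula is valid if it holds in every structure under every assignment. -/
def Valid {Op : Type} (φ : Formula Op) : Prop :=
  ∀ M : PreStruc Op, IsStruc M → ∀ s : ℕ → M.U, Sat M φ s

/-- `T ⊨ φ`: every structure satisfying all members of `T` (under every
assignment) satisfies `φ` under every assignment. -/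
def Models {Op : Type} (T : Set (Formula Op)) (φ : Formula Op) : Prop :=
  ∀ M : PreStruc Op, IsStruc M → (∀ ψ ∈ T, ∀ s : ℕ → M.U, Sat M ψ s) →
    ∀ s : ℕ → M.U, Sat M φ s

/-- `M ⊨ T`. -/
def SatTheory {Op : Type} (M : PreStruc Op) (T : Set (Formula Op)) : Prop :=
  ∀ φ ∈ T, ∀ s : ℕ → M.U, Sat M φ s

/-- The numeral `n̄`. -/
def numeral : ℕ → Term
  | 0 => .zero
  | n + 1 => .succ (numeral n)

/-- Helper for `φ^s`: replace every free occurrence of a variable `x` not in the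
list `B` of bound variables by the numeral for `s x`. -/
def Term.numSub (s : ℕ → ℕ) (B : List ℕ) : Term → Term
  | .var x => if x ∈ B then .var x else numeral (s x)
  | .zero => .zero
  | .succ t => .succ (t.numSub s B)
  | .add t u => .add (t.numSub s B) (u.numSub s B)
  | .mul t u => .mul (t.numSub s B) (u.numSub s B)

/-- Helper for `φ^s` (carrying the list of bound variables). -/
def Formula.numSub {Op : Type} (s : ℕ → ℕ) : List ℕ → Formula Op → Formula Op
  | B, .eq t u => .eq (t.numSub s B) (u.numSub s B)
  | B, .imp φ ψ => .imp (φ.numSub s B) (ψ.numSub s B)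
  | B, .not φ => .not (φ.numSub s B)
  | B, .all x φ => .all x (φ.numSub s (x :: B))
  | B, .op K φ => .op K (φ.numSub s B)

/-- `φ^s`: the sentence obtained by substituting the numeral for `s x` for each
free occurrence of each variable `x` in `φ`. -/
def assignSub {Op : Type} (s : ℕ → ℕ) (φ : Formula Op) : Formula Op :=
  φ.numSub s []

/-- The intended structure `𝒩_T` of an `L_EA`-theory `T`: standard first-order
part and `𝒩_T ⊨ Kφ[s]` iff `T ⊨ φ^s`. -/
def NStruc (T : Set LEA) : PreStruc Unit where
  U := ℕ
  zero := 0
  succ := Nat.succ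
  add := (· + ·)
  mul := (· * ·)
  opSat := fun _ φ s => Models T (assignSub s φ)

/-- `T` is true: `𝒩_T ⊨ T`. -/
def TheoryTrue (T : Set LEA) : Prop := SatTheory (NStruc T) T

/-- `On(φ)`: the set of `α < ω·ω` such that `K^α` occurs in `φ`. -/
def Formula.On : LOO → Set Ord2
  | .eq _ _ => ∅
  | .imp φ ψ => φ.On ∪ ψ.On
  | .not φ => φ.On
  | .all _ φ => φ.On
  | .op α φ => insert α φ.On

/-- `T ∩ α`: the members of `T` all of whose superscripts are `< α`. -/
def cut (T : Set LOO) (α : Ord2) : Set LOO := {φ | φ ∈ T ∧ ∀ β ∈ φ.On, β < α}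

/-- The intended structure `𝓜_T` of an `L_{ω·ω}`-theory `T`: standard
first-order part and `𝓜_T ⊨ K^αφ[s]` iff `T∩α ⊨ φ^s`. -/
def MStruc (T : Set LOO) : PreStruc Ord2 where
  U := ℕ
  zero := 0
  succ := Nat.succ
  add := (· + ·)
  mul := (· * ·)
  opSat := fun α φ s => Models (cut T α) (assignSub s φ)

/-- The least element of a set `A ⊆ ω·ω` (junk value if `A` is empty):
first minimize the `ω`-coefficient, then the finite part. -/
noncomputable def leastIn (A : Set Ord2) : Ord2 :=
  let a := sInf {a : ℕ | ∃ b : ℕ, toLex (a, b) ∈ A}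
  toLex (a, sInf {b : ℕ | toLex (a, b) ∈ A})

/-- The stratifier given by `X ⊆ ω·ω`: fixes atomic formulas, commutes with
`→`, `¬`, `∀`, and sends `Kφ₀` to `K^α φ₀⁺` where `α` is the least element of
`X \ On(φ₀⁺)`. -/
noncomputable def stratify (X : Set Ord2) : LEA → LOO
  | .eq t u => .eq t u
  | .imp φ ψ => .imp (stratify X φ) (stratify X ψ)
  | .not φ => .not (stratify X φ)
  | .all x φ => .all x (stratify X φ)
  | .op _ φ => .op (leastIn (X \ (stratify X φ).On)) (stratify X φ)

/-- A stratifier is the map given by some infinite `X ⊆ ω·ω`. -/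
def IsStratifier (f : LEA → LOO) : Prop :=
  ∃ X : Set Ord2, X.Infinite ∧ f = stratify X

/-- `T^⊕ = { φ⁺ : φ ∈ T, ⁺ a stratifier }`. -/
def oplus (T : Set LEA) : Set LOO :=
  {ψ | ∃ φ ∈ T, ∃ f : LEA → LOO, IsStratifier f ∧ ψ = f φ}

/-- The veristratifier: the stratifier given by `X = {ω·1, ω·2, ω·3, …}`. -/
noncomputable def veristratifier : LEA → LOO :=
  stratify {α : Ord2 | ∃ n : ℕ, α = omul (n + 1) 0}

/-- `φ⁻`: change every `K^α` into `K`. -/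
def Formula.down : LOO → LEA
  | .eq t u => .eq t u
  | .imp φ ψ => .imp φ.down ψ.down
  | .not φ => .not φ.down
  | .all x φ => .all x φ.down
  | .op _ φ => .op () φ.down

/-- `M⁺` for an `L_{ω·ω}`-structure `M` and a stratifier `⁺`: same universe and
`L_PA`-part, and `M⁺ ⊨ Kφ[s]` iff `M ⊨ (Kφ)⁺[s]`. -/
def upStruc (M : PreStruc Ord2) (f : LEA → LOO) : PreStruc Unit where
  U := M.U
  zero := M.zero
  succ := M.succ
  add := M.add
  mul := M.mul
  opSat := fun _ φ s => Sat M (f (.op () φ)) s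

/-- `M⁻` for an `L_EA`-structure `M`: same universe and `L_PA`-part, and
`M⁻ ⊨ K^αφ[s]` iff `M ⊨ K(φ⁻)[s]`. -/
def downStruc (M : PreStruc Unit) : PreStruc Ord2 where
  U := M.U
  zero := M.zero
  succ := M.succ
  add := M.add
  mul := M.mul
  opSat := fun _ φ s => Sat M (.op () φ.down) s

open Classical in
/-- `h(φ)`: replace every occurrence of `K^α` with `α ∈ X` by `K^{h(α)}`. -/
noncomputable def mapOps (X : Set Ord2) (h : Ord2 → Ord2) : LOO → LOO
  | .eq t u => .eq t u
  | .imp φ ψ => .imp (mapOps X h φ) (mapOps X h ψ)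
  | .not φ => .not (mapOps X h φ)
  | .all x φ => .all x (mapOps X h φ)
  | .op α φ => .op (if α ∈ X then h α else α) (mapOps X h φ)

/-- `h : X → ω·ω` is order preserving. -/
def OrdPresOn (X : Set Ord2) (h : Ord2 → Ord2) : Prop :=
  ∀ a ∈ X, ∀ b ∈ X, a < b → h a < h b

/-- A uniform `L_{ω·ω}`-theory. -/
def Uniform (T : Set LOO) : Prop :=
  ∀ (X : Set Ord2) (h : Ord2 → Ord2), OrdPresOn X h →
    ∀ φ ∈ T, φ.On ⊆ X → mapOps X h φ ∈ T

/-- `h(M)`: same universe and `L_PA`-part as `M`, and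
`h(M) ⊨ K^αφ[s]` iff `M ⊨ h(K^αφ)[s]`. -/
noncomputable def hStruc (X : Set Ord2) (h : Ord2 → Ord2) (M : PreStruc Ord2) :
    PreStruc Ord2 where
  U := M.U
  zero := M.zero
  succ := M.succ
  add := M.add
  mul := M.mul
  opSat := fun α φ s => Sat M (mapOps X h (.op α φ)) s

/-- The depth of nesting of the operators. -/
def Formula.depth {Op : Type} : Formula Op → ℕ
  | .eq _ _ => 0
  | .imp φ ψ => max φ.depth ψ.depth
  | .not φ => φ.depth
  | .all _ φ => φ.depth
  | .op _ φ => φ.depth + 1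

/-- `∀x₁ ⋯ ∀xₙ φ`. -/
def Formula.alls {Op : Type} : List ℕ → Formula Op → Formula Op
  | [], φ => φ
  | x :: l, φ => .all x (Formula.alls l φ)

/-- `ψ` is a universal closure of `φ`: a sentence of the form `∀x₁ ⋯ ∀xₙ φ`. -/
def IsUClosure {Op : Type} (φ ψ : Formula Op) : Prop :=
  ψ.IsSentence ∧ ∃ l : List ℕ, ψ = Formula.alls l φ

/-- The schema `E₁`: universal closures of `Kφ`, `φ` valid. -/
def E1 : Set LEA := {χ | ∃ φ : LEA, Valid φ ∧ IsUClosure (KK φ) χ}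

/-- The schema `E₂`: universal closures of `K(φ→ψ) → Kφ → Kψ`. -/
def E2 : Set LEA :=
  {χ | ∃ φ ψ : LEA, IsUClosure (.imp (KK (.imp φ ψ)) (.imp (KK φ) (KK ψ))) χ}

/-- The schema `E′₂`: universal closures of `K(φ→ψ) → Kφ → Kψ` with
`depth(φ) ≤ depth(ψ)`. -/
def E2' : Set LEA :=
  {χ | ∃ φ ψ : LEA, φ.depth ≤ ψ.depth ∧
    IsUClosure (.imp (KK (.imp φ ψ)) (.imp (KK φ) (KK ψ))) χ}

/-- The schema `E₃`: universal closures of `Kφ → φ`. -/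
def E3 : Set LEA := {χ | ∃ φ : LEA, IsUClosure (.imp (KK φ) φ) χ}

/-- The Assigned Validity schema: all `φ^s` with `φ` valid, `s : ℕ → ℕ`. -/
def AssignedValidity : Set LEA :=
  {χ | ∃ (φ : LEA) (s : ℕ → ℕ), Valid φ ∧ χ = assignSub s φ}

/-- `K(T₀) = { Kφ : φ ∈ T₀ }`. -/
def KSet (T : Set LEA) : Set LEA := {χ | ∃ φ ∈ T, χ = KK φ}

/-- Membership in the smallest `K`-closed set containing `S`. -/
inductive KClosureMem (S : Set LEA) : LEA → Prop
  | base {φ : LEA} : φ ∈ S → KClosureMem S φ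
  | k {φ : LEA} : KClosureMem S φ → KClosureMem S (KK φ)

/-- The smallest `K`-closed theory containing `S`. -/
def KClosure (S : Set LEA) : Set LEA := {φ | KClosureMem S φ}

/-- `T₀` is upgeneric: `𝓜_{T^⊕} ⊨ T₀^⊕` for every `L_EA`-theory `T ⊇ T₀`. -/
def Upgeneric (T₀ : Set LEA) : Prop :=
  ∀ T : Set LEA, IsTheory T → T₀ ⊆ T → SatTheory (MStruc (oplus T)) (oplus T₀)

/-- A concrete Gödel numbering of terms. -/
def encodeTerm : Term → ℕ
  | .var x => Nat.pair 0 x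
  | .zero => Nat.pair 1 0
  | .succ t => Nat.pair 2 (encodeTerm t)
  | .add t u => Nat.pair 3 (Nat.pair (encodeTerm t) (encodeTerm u))
  | .mul t u => Nat.pair 4 (Nat.pair (encodeTerm t) (encodeTerm u))

/-- A concrete Gödel numbering of `L_EA`-formulas. -/
def encodeLEA : LEA → ℕ
  | .eq t u => Nat.pair 0 (Nat.pair (encodeTerm t) (encodeTerm u))
  | .imp φ ψ => Nat.pair 1 (Nat.pair (encodeLEA φ) (encodeLEA ψ))
  | .not φ => Nat.pair 2 (encodeLEA φ)
  | .all x φ => Nat.pair 3 (Nat.pair x (encodeLEA φ))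
  | .op _ φ => Nat.pair 4 (encodeLEA φ)

/-- `T` is recursively enumerable: the set of Gödel numbers of its members is r.e. -/
def RETheory (T : Set LEA) : Prop := REPred fun n => ∃ φ ∈ T, encodeLEA φ = n

/-- `T₀` is r.e.-upgeneric: `T₀` is r.e. and `𝓜_{T^⊕} ⊨ T₀^⊕` for every r.e.
`L_EA`-theory `T ⊇ T₀`. -/
def REUpgeneric (T₀ : Set LEA) : Prop :=
  RETheory T₀ ∧
    ∀ T : Set LEA, IsTheory T → RETheory T → T₀ ⊆ T →
      SatTheory (MStruc (oplus T)) (oplus T₀)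

/-! Let `M ⊨ T∩(ω·n)`. For `C ∈ ℕ`, the map `collapse n C` fixes every ordinal below `ω·n`
and squeezes the ordinals `≥ ω·n` with finite part `< C` order-preservingly into the block
`[ω·(n-1), ω·n)`. By uniformity, every `ψ ∈ T` is sent into `T∩(ω·n)` by all but finitely
many of these maps, so `ψ` holds in all but finitely many of the structures
`collapse n C (M)`. By Łoś's theorem, their ultraproduct along a non-principal ultrafilter on
`ℕ` is a model of `T`, and it agrees with `M` on every `φ` with `On(φ) ⊆ ω·n`, since such a
`φ` is fixed by all the collapses. -/

open Filter

lemma Term.vars_finite (t : Term) : t.vars.Finite := by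
  induction t <;> simp_all [Term.vars]

lemma Formula.free_finite {Op : Type} (φ : Formula Op) : φ.free.Finite := by
  induction φ with
  | eq t u => exact t.vars_finite.union u.vars_finite
  | imp φ ψ ihφ ihψ => exact ihφ.union ihψ
  | not φ ih => exact ih
  | all x φ ih => exact ih.sdiff
  | op K φ ih => exact ih

lemma Formula.On_finite (φ : LOO) : φ.On.Finite := by
  induction φ with
  | eq t u => exact Set.finite_empty
  | imp φ ψ ihφ ihψ => exact ihφ.union ihψ
  | not φ ih => exact ih
  | all x φ ih => exact ih
  | op α φ ih => exact ih.insert α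

section MapOps

variable (X : Set Ord2) (h : Ord2 → Ord2)

lemma mapOps_of_On_subset {ψ : LOO} (hψ : ψ.On ⊆ X) :
    mapOps X h ψ = mapOps Set.univ h ψ := by
  induction ψ with
  | eq t u => rfl
  | imp φ χ ihφ ihχ =>
    rw [Formula.On, Set.union_subset_iff] at hψ
    simp only [mapOps, ihφ hψ.1, ihχ hψ.2]
  | not φ ih => simp only [mapOps, ih hψ]
  | all x φ ih => simp only [mapOps, ih hψ]
  | op α φ ih =>
    rw [Formula.On, Set.insert_subset_iff] at hψ
    simp only [mapOps, ih hψ.2, if_pos hψ.1, Set.mem_univ, if_true]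

lemma On_mapOps_univ (ψ : LOO) : (mapOps Set.univ h ψ).On = h '' ψ.On := by
  induction ψ with
  | eq t u => simp [mapOps, Formula.On]
  | imp φ χ ihφ ihχ => simp only [mapOps, Formula.On, ihφ, ihχ, Set.image_union]
  | not φ ih => simp only [mapOps, Formula.On, ih]
  | all x φ ih => simp only [mapOps, Formula.On, ih]
  | op α φ ih => simp [mapOps, Formula.On, ih, Set.image_insert_eq]

lemma mapOps_univ_eq_self {ψ : LOO} (hψ : ∀ β ∈ ψ.On, h β = β) :
    mapOps Set.univ h ψ = ψ := by
  induction ψ with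
  | eq t u => rfl
  | imp φ χ ihφ ihχ =>
    simp only [mapOps, ihφ fun β hβ => hψ β (Or.inl hβ), ihχ fun β hβ => hψ β (Or.inr hβ)]
  | not φ ih => simp only [mapOps, ih hψ]
  | all x φ ih => simp only [mapOps, ih hψ]
  | op α φ ih =>
    simp [mapOps, ih fun β hβ => hψ β (Set.mem_insert_of_mem α hβ), hψ α (Set.mem_insert α _)]

lemma free_mapOps (ψ : LOO) : (mapOps X h ψ).free = ψ.free := by
  induction ψ <;> simp_all [mapOps, Formula.free]

lemma Formula.alpha.mapOps {ρ : List (ℕ × ℕ)} {ψ χ : LOO} (hψχ : ψ.alpha ρ χ) :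
    (mapOps X h ψ).alpha ρ (mapOps X h χ) := by
  induction ψ generalizing ρ χ <;> cases χ <;> simp only [Formula.alpha] at hψχ
  case eq.eq => exact hψχ
  case imp.imp ihφ ihψ _ _ => exact ⟨ihφ hψχ.1, ihψ hψχ.2⟩
  case not.not ih _ => exact ih hψχ
  case all.all ih _ _ => exact ih hψχ
  case op.op ih _ _ =>
    obtain ⟨rfl, hφ⟩ := hψχ
    exact ⟨rfl, ih hφ⟩

lemma mapOps_subst (x : ℕ) (u : Term) (ψ : LOO) :
    mapOps X h (ψ.subst x u) = (mapOps X h ψ).subst x u := by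
  induction ψ with
  | all y φ ih => by_cases hy : y = x <;> simp [mapOps, Formula.subst, hy, ih]
  | _ => simp_all [mapOps, Formula.subst]

lemma Formula.Substitutable.mapOps {x : ℕ} {u : Term} {ψ : LOO} (hψ : ψ.Substitutable x u) :
    (mapOps X h ψ).Substitutable x u := by
  induction ψ with
  | all y φ ih =>
    rcases hψ with hxy | hx | ⟨hy, hφ⟩
    · exact Or.inl hxy
    · exact Or.inr (Or.inl (by rwa [free_mapOps]))
    · exact Or.inr (Or.inr ⟨hy, ih hφ⟩)
  | _ => simp_all [FCT.mapOps, Formula.Substitutable]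

end MapOps

section HStruc

variable (X : Set Ord2) (h : Ord2 → Ord2) (M : PreStruc Ord2)

lemma Term.eval_hStruc (s : ℕ → M.U) (t : Term) :
    t.eval (hStruc X h M) s = t.eval M s := by
  induction t with
  | var x => rfl
  | zero => rfl
  | succ t ih => exact congrArg M.succ ih
  | add t u iht ihu => exact congrArg₂ M.add iht ihu
  | mul t u iht ihu => exact congrArg₂ M.mul iht ihu

lemma sat_hStruc_iff (ψ : LOO) (s : ℕ → M.U) :
    Sat (hStruc X h M) ψ s ↔ Sat M (mapOps X h ψ) s := by
  induction ψ generalizing s with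
  | eq t u => simp only [Sat, mapOps, Term.eval_hStruc]; rfl
  | imp φ χ ihφ ihχ => exact imp_congr (ihφ s) (ihχ s)
  | not φ ih => exact not_congr (ih s)
  | all x φ ih => exact forall_congr' fun a => ih _
  | op α φ => rfl

variable {M} in
lemma IsStruc.hStruc (hM : IsStruc M) : IsStruc (hStruc X h M) := by
  obtain ⟨hfree, halpha, hsubst⟩ := hM
  refine ⟨fun K χ s t hst => ?_, fun K χ χ' s hχ => ?_, fun K χ x y s hχ => ?_⟩
  · exact hfree _ _ s t (by rwa [free_mapOps])
  · exact halpha _ _ _ s (hχ.mapOps X h)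
  · change M.opSat _ (mapOps X h (χ.subst x (.var y))) s ↔ _
    rw [mapOps_subst]
    exact hsubst _ _ x y s (hχ.mapOps X h)

end HStruc

section Ultraproduct

variable {Op J : Type} (N : J → PreStruc Op) (𝒰 : Ultrafilter J)

noncomputable def ultraproduct : PreStruc Op where
  U := (𝒰 : Filter J).Product fun j => (N j).U
  zero := Quotient.mk'' fun j => (N j).zero
  succ := Quotient.map' (fun a j => (N j).succ (a j)) fun _ _ hab =>
    hab.mono fun j e => congrArg (N j).succ e
  add := Quotient.map₂' (fun a b j => (N j).add (a j) (b j)) fun _ _ ha _ _ hb =>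
    (ha.and hb).mono fun j e => congrArg₂ (N j).add e.1 e.2
  mul := Quotient.map₂' (fun a b j => (N j).mul (a j) (b j)) fun _ _ ha _ _ hb =>
    (ha.and hb).mono fun j e => congrArg₂ (N j).mul e.1 e.2
  opSat K χ s := ∀ᶠ j in 𝒰, (N j).opSat K χ fun k => (s k).out j

variable {N 𝒰}

lemma ultraproduct_out_mk_eventually (a : (j : J) → (N j).U) :
    ∀ᶠ j in 𝒰, (Quotient.mk'' a : (ultraproduct N 𝒰).U).out j = a j :=
  Quotient.exact (Quotient.out_eq (Quotient.mk'' a : (ultraproduct N 𝒰).U))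

lemma Term.eval_ultraproduct (sb : ℕ → (j : J) → (N j).U) (t : Term) :
    t.eval (ultraproduct N 𝒰) (fun k => Quotient.mk'' (sb k)) =
      Quotient.mk'' fun j => t.eval (N j) fun k => sb k j := by
  induction t with
  | var x => rfl
  | zero => rfl
  | succ t ih => exact congrArg (ultraproduct N 𝒰).succ ih
  | add t u iht ihu => exact congrArg₂ (ultraproduct N 𝒰).add iht ihu
  | mul t u iht ihu => exact congrArg₂ (ultraproduct N 𝒰).mul iht ihu

lemma sat_ultraproduct_iff (hN : ∀ j, IsStruc (N j)) (ψ : Formula Op)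
    (sb : ℕ → (j : J) → (N j).U) :
    Sat (ultraproduct N 𝒰) ψ (fun k => Quotient.mk'' (sb k)) ↔
      ∀ᶠ j in 𝒰, Sat (N j) ψ fun k => sb k j := by
  induction ψ generalizing sb with
  | eq t u =>
    simp only [Sat, Term.eval_ultraproduct]
    exact Quotient.eq''
  | imp φ χ ihφ ihχ =>
    simp only [Sat, ihφ, ihχ]
    exact Ultrafilter.eventually_imp.symm
  | not φ ih =>
    simp only [Sat, ih]
    exact Ultrafilter.eventually_not.symm
  | all x φ ih =>
    have hupdate (g : (j : J) → (N j).U) :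
        Sat (ultraproduct N 𝒰) φ (Function.update (fun k => Quotient.mk'' (sb k)) x
            (Quotient.mk'' g)) ↔
          ∀ᶠ j in 𝒰, Sat (N j) φ (Function.update (fun k => sb k j) x (g j)) := by
      have hmk : Function.update (fun k => (Quotient.mk'' (sb k) : (ultraproduct N 𝒰).U)) x
          (Quotient.mk'' g) = fun k => Quotient.mk'' (Function.update sb x g k) :=
        (Function.comp_update Quotient.mk'' sb x g).symm
      have heval (j : J) : (fun k => Function.update sb x g k j) =
          Function.update (fun k => sb k j) x (g j) := by
        funext k
        exact Function.apply_update (fun _ a => a j) sb x g k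
      rw [congrArg (Sat _ φ) hmk, ih]
      simp only [heval]
    change (∀ a, _) ↔ _
    refine ⟨fun hall => ?_, fun hev a => ?_⟩
    · -- a witness of failure, chosen wherever one exists, reduces `∀ a` to a single `g`
      have hwit (j : J) : ∃ a : (N j).U,
          (∃ b, ¬ Sat (N j) φ (Function.update (fun k => sb k j) x b)) →
            ¬ Sat (N j) φ (Function.update (fun k => sb k j) x a) := by
        by_cases hex : ∃ b, ¬ Sat (N j) φ (Function.update (fun k => sb k j) x b)
        · exact ⟨hex.choose, fun _ => hex.choose_spec⟩
        · exact ⟨(N j).zero, fun h => absurd h hex⟩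
      choose g hg using hwit
      refine ((hupdate g).mp (hall _)).mono fun j hj b => ?_
      by_contra hb
      exact hg j ⟨b, hb⟩ hj
    · induction a using Quotient.inductionOn' with
      | h g => exact (hupdate g).mpr (hev.mono fun j hj => hj (g j))
  | op K χ =>
    have hout : ∀ᶠ j in 𝒰, ∀ k ∈ χ.free,
        (Quotient.mk'' (sb k) : (ultraproduct N 𝒰).U).out j = sb k j :=
      χ.free_finite.eventually_all.mpr fun k _ => ultraproduct_out_mk_eventually (sb k)
    exact eventually_congr (hout.mono fun j hj => (hN j).1 K χ _ _ hj)

lemma IsStruc.ultraproduct (hN : ∀ j, IsStruc (N j)) : IsStruc (ultraproduct N 𝒰) := by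
  refine ⟨fun K χ s t hst => ?_, fun K χ χ' s hχ => ?_, fun K χ x y s hχ => ?_⟩
  · exact eventually_congr (.of_forall fun j =>
      (hN j).1 K χ _ _ fun x hx => by rw [hst x hx])
  · exact eventually_congr (.of_forall fun j => (hN j).2.1 K χ χ' _ hχ)
  · refine eventually_congr (.of_forall fun j => ?_)
    have hout : (fun k => (Function.update s x (s y) k).out j) =
        Function.update (fun k => (s k).out j) x ((s y).out j) := by
      funext k
      exact Function.apply_update (fun _ q => q.out j) s x (s y) k
    rw [hout]
    exact (hN j).2.2 K χ x y _ hχ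

end Ultraproduct

section Collapse

variable {n C : ℕ} {β : Ord2}

/-- For `a ≥ n`, `ω·a + b ↦ ω·(n-1) + (C·a + b)`: reading `C·a + b` in base `C` keeps the
order as long as all finite parts are `< C`. -/
def collapse (n C : ℕ) (β : Ord2) : Ord2 :=
  if (ofLex β).1 < n then β else toLex (n - 1, C * (ofLex β).1 + (ofLex β).2)

lemma lt_omul_iff : β < omul n 0 ↔ (ofLex β).1 < n := by
  simp [omul, Prod.Lex.lt_iff]

lemma collapse_of_lt_omul (hβ : β < omul n 0) : collapse n C β = β :=
  if_pos (lt_omul_iff.mp hβ)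

lemma collapse_lt_omul (hn : 0 < n) : collapse n C β < omul n 0 := by
  unfold collapse
  split_ifs with hβ
  · exact lt_omul_iff.mpr hβ
  · exact lt_omul_iff.mpr (by simp only [ofLex_toLex]; omega)

lemma collapse_strictMonoOn : StrictMonoOn (collapse n C) {β | (ofLex β).2 < C} := by
  intro β hβ γ hγ hβγ
  simp only [Set.mem_ofPred_eq] at hβ hγ
  rw [Prod.Lex.lt_iff] at hβγ
  unfold collapse
  split_ifs with hβn hγn hγn
  · exact Prod.Lex.lt_iff.mpr hβγ
  · have : C ≤ C * (ofLex γ).1 := Nat.le_mul_of_pos_right C (by omega)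
    rw [Prod.Lex.lt_iff]
    simp only [ofLex_toLex]
    omega
  · omega
  · rw [Prod.Lex.lt_iff]
    simp only [ofLex_toLex, true_and, lt_irrefl, false_or]
    rcases hβγ with hlt | ⟨heq, hlt⟩
    · have : C * ((ofLex β).1 + 1) ≤ C * (ofLex γ).1 := Nat.mul_le_mul_left C hlt
      rw [Nat.mul_succ] at this
      omega
    · rw [heq]
      omega

lemma Formula.eventually_collapse_strictMonoOn (ψ : LOO) :
    ∀ᶠ C in atTop, StrictMonoOn (collapse n C) ψ.On := by
  obtain ⟨B, hB⟩ := (ψ.On_finite.image fun β => (ofLex β).2).bddAbove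
  refine (eventually_gt_atTop B).mono fun C hC => collapse_strictMonoOn.mono ?_
  intro β hβ
  exact (hB ⟨β, hβ, rfl⟩).trans_lt hC

lemma mapOps_collapse_mem_cut {T : Set LOO} (hU : Uniform T) (hn : 0 < n) {ψ : LOO}
    (hψ : ψ ∈ T) (hC : StrictMonoOn (collapse n C) ψ.On) :
    mapOps Set.univ (collapse n C) ψ ∈ cut T (omul n 0) := by
  refine ⟨?_, ?_⟩
  · rw [← mapOps_of_On_subset ψ.On _ subset_rfl]
    exact hU _ _ (fun a ha b hb hab => hC ha hb hab) ψ hψ subset_rfl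
  · rw [On_mapOps_univ]
    rintro _ ⟨β, -, rfl⟩
    exact collapse_lt_omul hn

end Collapse

section CollapseTheorem

variable {n : ℕ} {M : PreStruc Ord2}

noncomputable abbrev collapseUltraproduct (n : ℕ) (M : PreStruc Ord2) : PreStruc Ord2 :=
  ultraproduct (fun C => hStruc Set.univ (collapse n C) M) (hyperfilter ℕ)

lemma satTheory_collapseUltraproduct {T : Set LOO} (hU : Uniform T) (hn : 0 < n)
    (hM : IsStruc M) (hMT : SatTheory M (cut T (omul n 0))) :
    SatTheory (collapseUltraproduct n M) T := by
  intro ψ hψ s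
  have hs : s = fun k => Quotient.mk'' (s k).out := funext fun k => (Quotient.out_eq _).symm
  rw [hs]
  refine (sat_ultraproduct_iff (fun C => hM.hStruc _ _) ψ fun k => (s k).out).mpr ?_
  have hmono := (ψ.eventually_collapse_strictMonoOn (n := n)).filter_mono Nat.hyperfilter_le_atTop
  refine hmono.mono fun C hC => ?_
  exact (sat_hStruc_iff _ _ M ψ _).mpr (hMT _ (mapOps_collapse_mem_cut hU hn hψ hC) _)

lemma sat_collapseUltraproduct_iff (hM : IsStruc M) {φ : LOO}
    (hφ : φ.On ⊆ {β : Ord2 | β < omul n 0}) (s : ℕ → M.U) :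
    Sat (collapseUltraproduct n M) φ (fun k => Quotient.mk'' fun _ => s k) ↔ Sat M φ s := by
  have hfix (C : ℕ) : mapOps Set.univ (collapse n C) φ = φ :=
    mapOps_univ_eq_self _ fun β hβ => collapse_of_lt_omul (hφ hβ)
  refine (sat_ultraproduct_iff (fun C => hM.hStruc _ _) φ fun k _ => s k).trans ?_
  simp only [sat_hStruc_iff, hfix, eventually_const]

end CollapseTheorem

theorem collapse_theorem_general (T : Set LOO) (hU : Uniform T)
    (n : ℕ) (hn : 0 < n) (φ : LOO) (hφ : φ.On ⊆ {β : Ord2 | β < omul n 0}) :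
    Models T φ ↔ Models (cut T (omul n 0)) φ := by
  refine ⟨fun hTφ M hM hMT s => ?_, fun hφT M hM hMT => hφT M hM fun ψ hψ => hMT ψ hψ.1⟩
  have hN : IsStruc (collapseUltraproduct n M) :=
    IsStruc.ultraproduct fun C => hM.hStruc Set.univ (collapse n C)
  exact (sat_collapseUltraproduct_iff hM hφ s).mp
    (hTφ _ hN (satTheory_collapseUltraproduct hU hn hM hMT) _)

/-- The collapse theorem: for a uniform `L_{ω·ω}`-theory `T`, `0 < n`, and `φ`
with `On(φ) ⊆ ω·n`, `T ⊨ φ` iff `T∩(ω·n) ⊨ φ`. -/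
theorem collapse_theorem (T : Set LOO) (hT : IsTheory T) (hU : Uniform T)
    (n : ℕ) (hn : 0 < n) (φ : LOO) (hφ : φ.On ⊆ {β : Ord2 | β < omul n 0}) :
    Models T φ ↔ Models (cut T (omul n 0)) φ :=
  collapse_theorem_general T hU n hn φ hφ

end FCT
end

section
/- (Upward proof stratification) For any L_EA-theory T, any L_EA-sentence φ, and any stratifier ⁺, the following are equivalent: (1) T ⊨ φ; (2) T⁺ ⊨ φ⁺, where T⁺ = {τ⁺ : τ ∈ T}; (3) T^⊕ ⊨ φ⁺. -/
namespace FCT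

/-! Forgetting the superscripts (`φ ↦ φ⁻`, `M ↦ M⁻`) inverts every stratifier, and `M ↦ M⁺`
interprets `K` in an `L_{ω·ω}`-structure by the stratified formula. Both constructions preserve
the base-logic axioms (1)–(3) and transfer satisfaction, so a countermodel on either side yields
one on the other; `T^⊕` sits between `T⁺` and a theory whose members all forget back into `T`. -/

section Down

lemma Formula.free_down (χ : LOO) : χ.down.free = χ.free := by
  induction χ <;> simp [Formula.down, Formula.free, *]

lemma Formula.alpha_down {χ ξ : LOO} {ρ : List (ℕ × ℕ)} (h : χ.alpha ρ ξ) :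
    χ.down.alpha ρ ξ.down := by
  induction χ generalizing ξ ρ <;> cases ξ <;> simp_all [Formula.alpha, Formula.down]

lemma Formula.down_subst (x : ℕ) (u : Term) (χ : LOO) :
    (χ.subst x u).down = χ.down.subst x u := by
  induction χ with
  | all y ψ ih => by_cases h : y = x <;> simp [Formula.subst, Formula.down, h, ih]
  | _ => simp [Formula.subst, Formula.down, *]

lemma Formula.Substitutable.down {x : ℕ} {u : Term} {χ : LOO} (h : χ.Substitutable x u) :
    χ.down.Substitutable x u := by
  induction χ with
  | all y χ ih =>
    simp only [Formula.Substitutable, Formula.down, Formula.free_down] at h ⊢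
    tauto
  | _ => simp_all [Formula.Substitutable, Formula.down]

lemma Term.eval_downStruc (M : PreStruc Unit) (s : ℕ → M.U) (t : Term) :
    t.eval (downStruc M) s = t.eval M s := by
  induction t <;> simp only [Term.eval, *] <;> rfl

lemma sat_downStruc (M : PreStruc Unit) (χ : LOO) (s : ℕ → M.U) :
    Sat (downStruc M) χ s ↔ Sat M χ.down s := by
  induction χ generalizing s with
  | all x χ ih => exact forall_congr' fun a => ih _
  | _ => simp only [Sat, Formula.down, Term.eval_downStruc, *] <;> rfl

lemma IsStruc.downStruc {M : PreStruc Unit} (hM : IsStruc M) : IsStruc (downStruc M) := by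
  obtain ⟨h_free, h_alpha, h_subst⟩ := hM
  refine ⟨fun _ χ s t hst => h_free () χ.down s t ?_, fun _ χ ξ s hχξ => h_alpha () _ _ s
    (Formula.alpha_down hχξ), fun _ χ x y s hχ => ?_⟩
  · exact fun x hx => hst x (by rwa [Formula.free_down] at hx)
  · show Sat M (.op () (χ.subst x (.var y)).down) s ↔ _
    rw [Formula.down_subst]
    exact h_subst () χ.down x y s hχ.down

theorem Models.down {S : Set LOO} {T : Set LEA} {ψ : LOO} (h : Models S ψ)
    (hST : ∀ χ ∈ S, χ.down ∈ T) : Models T ψ.down := by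
  intro M hM hMT s
  rw [← sat_downStruc]
  exact h _ hM.downStruc (fun χ hχ s' => (sat_downStruc M χ s').2 (hMT _ (hST χ hχ) s')) s

end Down

section Stratify

variable (X : Set Ord2)

lemma down_stratify (φ : LEA) : (stratify X φ).down = φ := by
  induction φ <;> simp [stratify, Formula.down, *]

lemma free_stratify (φ : LEA) : (stratify X φ).free = φ.free := by
  induction φ <;> simp [stratify, Formula.free, *]

lemma Formula.On_subst (x : ℕ) (u : Term) (χ : LOO) : (χ.subst x u).On = χ.On := by
  induction χ with
  | all y ψ ih => by_cases h : y = x <;> simp [Formula.subst, Formula.On, h, ih]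
  | _ => simp [Formula.subst, Formula.On, *]

lemma stratify_subst (x : ℕ) (u : Term) (φ : LEA) :
    stratify X (φ.subst x u) = (stratify X φ).subst x u := by
  induction φ with
  | all y ψ ih => by_cases h : y = x <;> simp [Formula.subst, stratify, h, ih]
  | _ => simp [Formula.subst, stratify, Formula.On_subst, *]

variable {X}

lemma Formula.Substitutable.stratify {x : ℕ} {u : Term} {φ : LEA}
    (h : φ.Substitutable x u) : (FCT.stratify X φ).Substitutable x u := by
  induction φ with
  | all y φ ih =>
    simp only [Formula.Substitutable, FCT.stratify, free_stratify] at h ⊢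
    tauto
  | _ => simp_all [Formula.Substitutable, FCT.stratify]

/-- The superscript of `(Kφ)⁺` is computed from `On(φ⁺)`, so matching the superscripts needs
`On` to be invariant under renaming of bound variables along the way. -/
lemma Formula.alpha_stratify {φ ψ : LEA} {ρ : List (ℕ × ℕ)} (h : φ.alpha ρ ψ) :
    (stratify X φ).alpha ρ (stratify X ψ) ∧ (stratify X φ).On = (stratify X ψ).On := by
  induction φ generalizing ψ ρ <;> cases ψ <;> simp only [Formula.alpha] at h
  case eq.eq => exact ⟨h, rfl⟩
  case imp.imp ih₁ ih₂ _ _ =>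
    obtain ⟨h_var₁, h_On₁⟩ := ih₁ h.1
    obtain ⟨h_var₂, h_On₂⟩ := ih₂ h.2
    exact ⟨⟨h_var₁, h_var₂⟩, by simp only [stratify, Formula.On, h_On₁, h_On₂]⟩
  case not.not ih _ =>
    obtain ⟨h_var, h_On⟩ := ih h
    exact ⟨h_var, by simp only [stratify, Formula.On, h_On]⟩
  case all.all ih _ _ =>
    obtain ⟨h_var, h_On⟩ := ih h
    exact ⟨h_var, by simp only [stratify, Formula.On, h_On]⟩
  case op.op ih _ _ =>
    obtain ⟨h_var, h_On⟩ := ih h.2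
    exact ⟨⟨by rw [h_On], h_var⟩, by simp only [stratify, Formula.On, h_On]⟩

end Stratify

section Up

variable (M : PreStruc Ord2) (X : Set Ord2)

lemma Term.eval_upStruc (f : LEA → LOO) (s : ℕ → M.U) (t : Term) :
    t.eval (upStruc M f) s = t.eval M s := by
  induction t <;> simp only [Term.eval, *] <;> rfl

lemma sat_upStruc (φ : LEA) (s : ℕ → M.U) :
    Sat (upStruc M (stratify X)) φ s ↔ Sat M (stratify X φ) s := by
  induction φ generalizing s with
  | all x φ ih => exact forall_congr' fun a => ih _
  | _ => simp only [Sat, stratify, Term.eval_upStruc, *] <;> rfl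

variable {M}

lemma IsStruc.upStruc (hM : IsStruc M) : IsStruc (upStruc M (stratify X)) := by
  obtain ⟨h_free, h_alpha, h_subst⟩ := hM
  refine ⟨fun _ φ s t hst => h_free _ _ s t ?_, fun _ φ ψ s hφψ => ?_, fun _ φ x y s hφ => ?_⟩
  · exact fun x hx => hst x (by rwa [free_stratify] at hx)
  · obtain ⟨h_var, h_On⟩ := Formula.alpha_stratify (X := X) hφψ
    show Sat M (.op (leastIn (X \ (stratify X φ).On)) (stratify X φ)) s ↔
      Sat M (.op (leastIn (X \ (stratify X ψ).On)) (stratify X ψ)) s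
    rw [← h_On]
    exact h_alpha _ _ _ s h_var
  · show Sat M (.op (leastIn (X \ (stratify X (φ.subst x (.var y))).On))
        (stratify X (φ.subst x (.var y)))) s ↔ _
    rw [stratify_subst, Formula.On_subst]
    exact h_subst _ _ x y s hφ.stratify

end Up

theorem Models.stratify {T : Set LEA} {φ : LEA} (h : Models T φ) (X : Set Ord2) :
    Models (stratify X '' T) (stratify X φ) := by
  intro M hM hMT s
  rw [← sat_upStruc]
  exact h _ (hM.upStruc X) (fun τ hτ s' => (sat_upStruc M X τ s').2 (hMT _ ⟨τ, hτ, rfl⟩ s')) s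

theorem Models.mono {Op : Type} {S S' : Set (Formula Op)} {φ : Formula Op} (h : Models S φ)
    (hSS' : S ⊆ S') : Models S' φ :=
  fun M hM hMS' => h M hM fun ψ hψ => hMS' ψ (hSS' hψ)

theorem upward_proof_stratification_general (T : Set LEA)
    (φ : LEA) (f : LEA → LOO) (hf : IsStratifier f) :
    (Models T φ ↔ Models (f '' T) (f φ)) ∧ (Models T φ ↔ Models (oplus T) (f φ)) := by
  obtain ⟨X, hX, rfl⟩ := hf
  have image_sub_oplus : stratify X '' T ⊆ oplus T := by
    rintro _ ⟨τ, hτ, rfl⟩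
    exact ⟨τ, hτ, stratify X, ⟨X, hX, rfl⟩, rfl⟩
  have of_down_mem {S : Set LOO} (hS : ∀ χ ∈ S, χ.down ∈ T) (h : Models S (stratify X φ)) :
      Models T φ := by
    simpa only [down_stratify] using h.down hS
  refine ⟨⟨fun h => h.stratify X, of_down_mem ?_⟩,
    ⟨fun h => (h.stratify X).mono image_sub_oplus, of_down_mem ?_⟩⟩
  · rintro _ ⟨τ, hτ, rfl⟩
    rwa [down_stratify]
  · rintro _ ⟨τ, hτ, _, ⟨Y, -, rfl⟩, rfl⟩
    rwa [down_stratify]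

/-- Upward proof stratification: `T ⊨ φ` iff `T⁺ ⊨ φ⁺` iff `T^⊕ ⊨ φ⁺`. -/
theorem upward_proof_stratification (T : Set LEA) (hT : IsTheory T)
    (φ : LEA) (hφ : φ.IsSentence) (f : LEA → LOO) (hf : IsStratifier f) :
    (Models T φ ↔ Models (f '' T) (f φ)) ∧ (Models T φ ↔ Models (oplus T) (f φ)) :=
  upward_proof_stratification_general T φ f hf

end FCT
end

section
/- For any L_EA-theory T, if 𝓜_{T^⊕} ⊨ T^⊕ then 𝒩_T ⊨ T (i.e. T is true). -/
/-! Stratify along `n ↦ ω·(n+1)`: the stratifier given by `{ω·1, ω·2, …}` turns each `Kψ` into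
`K^{ω·(d+1)} ψ⁺` with `d` the operator depth of `ψ`. Then `𝒩_T ⊨ φ[s]` iff `𝓜_{T^⊕} ⊨ φ⁺[s]`,
and at an operator this says `T ⊨ σ` iff `T^⊕ ∩ ω·(d+1) ⊨ σ⁺`. For `⇒`, a model of
`T^⊕ ∩ ω·(d+1)` is pulled back along a stratifier enumerating `ω·1, …, ω·d, ω·d+1, ω·d+2, …`:
all its superscripts lie below `ω·(d+1)`, so the pullback satisfies `T`, hence `σ`, and the
two stratifiers agree on `σ`. For `⇐`, an `L_EA`-model of `T` read as an `L_{ω·ω}`-structure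
by ignoring superscripts satisfies all of `T^⊕`, since erasing superscripts undoes any
stratifier. -/

namespace FCT

section Relabel

variable {Op Op' : Type}

lemma Formula.depth_subst (x : ℕ) (u : Term) (φ : Formula Op) :
    (φ.subst x u).depth = φ.depth := by
  induction φ with
  | all y φ ih => simp only [Formula.subst]; split <;> simp [Formula.depth, ih]
  | _ => simp [Formula.subst, Formula.depth, *]

lemma Formula.depth_numSub (s : ℕ → ℕ) (φ : Formula Op) (B : List ℕ) :
    (φ.numSub s B).depth = φ.depth := by
  induction φ generalizing B <;> simp [Formula.numSub, Formula.depth, *]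

lemma Formula.depth_eq_of_alpha {φ ψ : Formula Op} {ρ : List (ℕ × ℕ)} (h : φ.alpha ρ ψ) :
    φ.depth = ψ.depth := by
  induction φ generalizing ψ ρ <;> cases ψ <;> simp only [Formula.alpha] at h <;>
    grind [Formula.depth]

def Formula.relabel (F : Op → ℕ → Op') : Formula Op → Formula Op'
  | .eq t u => .eq t u
  | .imp φ ψ => .imp (φ.relabel F) (ψ.relabel F)
  | .not φ => .not (φ.relabel F)
  | .all x φ => .all x (φ.relabel F)
  | .op K φ => .op (F K φ.depth) (φ.relabel F)

lemma Formula.relabel_congr {F G : Op → ℕ → Op'} {φ : Formula Op}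
    (h : ∀ k < φ.depth, ∀ K, F K k = G K k) : φ.relabel F = φ.relabel G := by
  induction φ with
  | eq t u => rfl
  | imp φ ψ ihφ ihψ =>
    simp only [Formula.depth, lt_max_iff] at h
    simp only [Formula.relabel, ihφ fun k hk => h k (.inl hk), ihψ fun k hk => h k (.inr hk)]
  | not φ ih => simp only [Formula.relabel, ih h]
  | all x φ ih => simp only [Formula.relabel, ih h]
  | op K φ ih =>
    simp only [Formula.depth, Nat.lt_succ_iff] at h
    simp only [Formula.relabel, ih fun k hk => h k hk.le, h _ le_rfl]

variable (F : Op → ℕ → Op')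

lemma Formula.free_relabel (φ : Formula Op) : (φ.relabel F).free = φ.free := by
  induction φ <;> simp [Formula.relabel, Formula.free, *]

lemma Formula.relabel_subst (x : ℕ) (u : Term) (φ : Formula Op) :
    (φ.subst x u).relabel F = (φ.relabel F).subst x u := by
  induction φ with
  | all y φ ih => by_cases hyx : y = x <;> simp [Formula.subst, Formula.relabel, hyx, ih]
  | _ => simp [Formula.subst, Formula.relabel, Formula.depth_subst, *]

lemma Formula.relabel_numSub (s : ℕ → ℕ) (φ : Formula Op) (B : List ℕ) :
    (φ.numSub s B).relabel F = (φ.relabel F).numSub s B := by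
  induction φ generalizing B <;>
    simp [Formula.numSub, Formula.relabel, Formula.depth_numSub, *]

lemma Formula.Substitutable.relabel {x : ℕ} {u : Term} {φ : Formula Op}
    (h : φ.Substitutable x u) : (φ.relabel F).Substitutable x u := by
  induction φ <;> simp_all [Formula.Substitutable, Formula.relabel, Formula.free_relabel]
  tauto

lemma Formula.alpha_relabel {φ ψ : Formula Op} {ρ : List (ℕ × ℕ)} (h : φ.alpha ρ ψ) :
    (φ.relabel F).alpha ρ (ψ.relabel F) := by
  induction φ generalizing ψ ρ <;> cases ψ <;> simp only [Formula.alpha] at h <;>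
    grind [Formula.alpha, Formula.relabel, Formula.depth_eq_of_alpha]

end Relabel

section Comap

variable {Op Op' : Type} (F : Op → ℕ → Op')

-- Subsumes `upStruc M (stratify (Set.range g))` for increasing `g`, and `downStruc`.
def PreStruc.comap (M : PreStruc Op') : PreStruc Op where
  U := M.U
  zero := M.zero
  succ := M.succ
  add := M.add
  mul := M.mul
  opSat K φ s := M.opSat (F K φ.depth) (φ.relabel F) s

variable {F}

lemma eval_comap (M : PreStruc Op') (s : ℕ → M.U) (t : Term) :
    t.eval (M.comap F) s = t.eval M s := by
  induction t <;> simp only [Term.eval, *] <;> rfl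

lemma sat_comap (M : PreStruc Op') (φ : Formula Op) (s : ℕ → M.U) :
    Sat (M.comap F) φ s ↔ Sat M (φ.relabel F) s := by
  induction φ generalizing s with
  | eq t u => exact congr($(eval_comap M s t) = $(eval_comap M s u))
  | imp φ ψ ihφ ihψ => exact imp_congr (ihφ s) (ihψ s)
  | not φ ih => exact not_congr (ih s)
  | all x φ ih => exact forall_congr' fun a => ih _
  | op K φ => rfl

lemma IsStruc.comap {M : PreStruc Op'} (hM : IsStruc M) : IsStruc (M.comap F) := by
  obtain ⟨hfree, halpha, hsubst⟩ := hM
  refine ⟨fun K φ s t hst => ?_, fun K φ ψ s h => ?_, fun K φ x y s h => ?_⟩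
  · exact hfree _ _ s t fun x hx => hst x (φ.free_relabel F ▸ hx)
  · show M.opSat _ _ s ↔ M.opSat _ _ s
    rw [Formula.depth_eq_of_alpha h]
    exact halpha _ _ _ s (Formula.alpha_relabel F h)
  · show M.opSat _ _ s ↔ M.opSat _ _ _
    rw [Formula.depth_subst, Formula.relabel_subst]
    exact hsubst _ _ x y s (h.relabel F)

end Comap

lemma leastIn_eq_of_isLeast {A : Set Ord2} {m : Ord2} (h : IsLeast A m) : leastIn A = m := by
  obtain ⟨a, b⟩ := m
  have ha : IsLeast {a' | ∃ b', toLex (a', b') ∈ A} a :=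
    ⟨⟨b, h.1⟩, fun a' ⟨b', hb'⟩ =>
      (Prod.Lex.toLex_le_toLex.1 (h.2 hb')).elim le_of_lt fun h => h.1.le⟩
  have hb : IsLeast {b' | toLex (a, b') ∈ A} b :=
    ⟨h.1, fun b' hb' =>
      (Prod.Lex.toLex_le_toLex.1 (h.2 hb')).elim (fun h => absurd h (lt_irrefl a)) And.right⟩
  simp only [leastIn, ha.csInf_eq, hb.csInf_eq]
  rfl

lemma leastIn_range_diff_image_Iio {g : ℕ → Ord2} (hg : StrictMono g) (k : ℕ) :
    leastIn (Set.range g \ g '' Set.Iio k) = g k := by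
  refine leastIn_eq_of_isLeast ⟨⟨⟨k, rfl⟩, ?_⟩, ?_⟩
  · rintro ⟨j, hj, hjk⟩
    exact (Set.mem_Iio.1 hj).ne (hg.injective hjk)
  · rintro _ ⟨⟨n, rfl⟩, hn⟩
    exact hg.monotone (not_lt.1 fun hnk => hn ⟨n, hnk, rfl⟩)

lemma Formula.On_relabel {Op : Type} (g : ℕ → Ord2) (φ : Formula Op) :
    (φ.relabel fun _ => g).On = g '' Set.Iio φ.depth := by
  induction φ with
  | eq t u => simp [Formula.relabel, Formula.On, Formula.depth]
  | imp φ ψ ihφ ihψ =>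
    simp only [Formula.relabel, Formula.On, Formula.depth, ihφ, ihψ, ← Set.image_union]
    congr 1
    ext k
    simp
  | not φ ih => exact ih
  | all x φ ih => exact ih
  | op K φ ih =>
    simp only [Formula.relabel, Formula.On, Formula.depth, ih, Set.Iio_add_one_eq_Iic,
      ← Set.Iio_insert, Set.image_insert_eq]

lemma stratify_range_eq_relabel {g : ℕ → Ord2} (hg : StrictMono g) (φ : LEA) :
    stratify (Set.range g) φ = φ.relabel fun _ => g := by
  induction φ with
  | op K φ ih =>
    simp only [stratify, Formula.relabel, ih, Formula.On_relabel, leastIn_range_diff_image_Iio hg]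
  | _ => simp [stratify, Formula.relabel, *]

lemma relabel_unit_stratify (X : Set Ord2) (φ : LEA) :
    (stratify X φ).relabel (fun _ _ => ()) = φ := by
  induction φ <;> simp [stratify, Formula.relabel, *]

lemma relabel_unit_relabel {Op : Type} (F : Unit → ℕ → Op) (φ : LEA) :
    (φ.relabel F).relabel (fun _ _ => ()) = φ := by
  induction φ <;> simp [Formula.relabel, *]

section Oplus

variable {T : Set LEA} {g : ℕ → Ord2}

lemma relabel_mem_oplus (hg : StrictMono g) {θ : LEA} (hθ : θ ∈ T) :
    (θ.relabel fun _ => g) ∈ oplus T :=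
  ⟨θ, hθ, _, ⟨_, Set.infinite_range_of_injective hg.injective, rfl⟩,
    (stratify_range_eq_relabel hg θ).symm⟩

lemma relabel_mem_cut_oplus (hg : StrictMono g) {α : Ord2} (hgα : ∀ k, g k < α) {θ : LEA}
    (hθ : θ ∈ T) : (θ.relabel fun _ => g) ∈ cut (oplus T) α := by
  refine ⟨relabel_mem_oplus hg hθ, ?_⟩
  rw [Formula.On_relabel]
  rintro _ ⟨k, -, rfl⟩
  exact hgα k

lemma Models.relabel_cut_oplus (hg : StrictMono g) {α : Ord2} (hgα : ∀ k, g k < α) {σ : LEA}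
    (h : Models T σ) : Models (cut (oplus T) α) (σ.relabel fun _ => g) := by
  intro M hM hMT s
  refine (sat_comap M σ s).1 (h _ hM.comap (fun θ hθ s' => ?_) s)
  exact (sat_comap M θ s').2 (hMT _ (relabel_mem_cut_oplus hg hgα hθ) s')

lemma Models.of_relabel_cut_oplus {α : Ord2} {F : Unit → ℕ → Ord2} {σ : LEA}
    (h : Models (cut (oplus T) α) (σ.relabel F)) : Models T σ := by
  intro N hN hNT s
  have hσ := h (N.comap fun _ _ => ()) hN.comap ?_ s
  · rwa [sat_comap, relabel_unit_relabel] at hσ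
  rintro _ ⟨⟨θ, hθ, _, ⟨X, -, rfl⟩, rfl⟩, -⟩ s'
  exact (sat_comap N _ s').2 ((relabel_unit_stratify X θ).symm ▸ hNT θ hθ s')

end Oplus

-- The increasing enumeration of the set defining `veristratifier`.
def veriEnum (n : ℕ) : Ord2 := omul (n + 1) 0

lemma veriEnum_strictMono : StrictMono veriEnum := fun _ _ hab =>
  Prod.Lex.toLex_lt_toLex.2 (Or.inl (Nat.succ_lt_succ hab))

lemma models_iff_models_cut_oplus (T : Set LEA) (σ : LEA) :
    Models T σ ↔ Models (cut (oplus T) (veriEnum σ.depth)) (σ.relabel fun _ => veriEnum) := by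
  refine ⟨fun h => ?_, Models.of_relabel_cut_oplus⟩
  set d := σ.depth
  let g (k : ℕ) : Ord2 := if k < d then veriEnum k else omul d (k + 1)
  have hg : StrictMono g := strictMono_nat_of_lt_succ fun k => by
    simp only [g, veriEnum, omul]
    split_ifs <;> simp [Prod.Lex.toLex_lt_toLex] <;> omega
  have hgd : ∀ k, g k < veriEnum d := fun k => by
    simp only [g, veriEnum, omul]
    split_ifs <;> simp [Prod.Lex.toLex_lt_toLex]
    omega
  have hσ : (σ.relabel fun _ => g) = σ.relabel fun _ => veriEnum :=
    Formula.relabel_congr fun k hk _ => if_pos hk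
  exact hσ ▸ h.relabel_cut_oplus hg hgd

lemma nStruc_eq_comap (T : Set LEA) : NStruc T = (MStruc (oplus T)).comap fun _ => veriEnum := by
  simp only [NStruc, MStruc, PreStruc.comap]
  congr
  funext _ φ s
  rw [assignSub, assignSub, ← Formula.relabel_numSub, models_iff_models_cut_oplus,
    Formula.depth_numSub]

theorem true_of_oplus_sat_general (T : Set LEA)
    (h : SatTheory (MStruc (oplus T)) (oplus T)) : TheoryTrue T := by
  rw [TheoryTrue, nStruc_eq_comap]
  intro θ hθ s
  exact (sat_comap (MStruc (oplus T)) θ s).2 (h _ (relabel_mem_oplus veriEnum_strictMono hθ) s)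

/-- If `𝓜_{T^⊕} ⊨ T^⊕` then `𝒩_T ⊨ T`, i.e. `T` is true. -/
theorem true_of_oplus_sat (T : Set LEA) (hT : IsTheory T)
    (h : SatTheory (MStruc (oplus T)) (oplus T)) : TheoryTrue T :=
  true_of_oplus_sat_general T h

end FCT
end

section
/- (Uniformity lemma) For any L_EA-theory T, the L_{ω·ω}-theory T^⊕ is uniform. -/
namespace FCT

/-!
A stratifier given by `X` labels the `K`s of `φ` with exactly the first `depth φ` elements
of `X`, and the labelling depends only on their relative order. Hence if `h` is order
preserving on a set containing these labels, `h(φ⁺)` is the stratification of `φ` by any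
infinite set whose first `depth φ` elements are their `h`-images; appending an increasing
tail to these images gives such a set.
-/

lemma leastIn_le {A : Set Ord2} {x : Ord2} (hx : x ∈ A) : leastIn A ≤ x := by
  have hfst : sInf {a : ℕ | ∃ b : ℕ, toLex (a, b) ∈ A} ≤ (ofLex x).1 :=
    Nat.sInf_le ⟨(ofLex x).2, hx⟩
  change toLex _ ≤ toLex (ofLex x)
  rw [Prod.Lex.le_iff]
  rcases hfst.lt_or_eq with hlt | heq
  · exact Or.inl hlt
  · refine Or.inr ⟨heq, Nat.sInf_le ?_⟩
    change toLex (_, (ofLex x).2) ∈ A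
    rwa [heq]

lemma isLeast_leastIn {A : Set Ord2} (hA : A.Nonempty) : IsLeast A (leastIn A) := by
  refine ⟨?_, fun _ => leastIn_le⟩
  obtain ⟨x, hx⟩ := hA
  obtain ⟨b, hb⟩ := Nat.sInf_mem (s := {a : ℕ | ∃ b : ℕ, toLex (a, b) ∈ A})
    ⟨(ofLex x).1, (ofLex x).2, hx⟩
  exact Nat.sInf_mem (s := {b : ℕ | toLex (sInf {a : ℕ | ∃ b : ℕ, toLex (a, b) ∈ A}, b) ∈ A})
    ⟨b, hb⟩

noncomputable def nthOrd : Set Ord2 → ℕ → Ord2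
  | X, 0 => leastIn X
  | X, n + 1 => nthOrd (X \ {leastIn X}) n

lemma nthOrd_strictMono {X : Set Ord2} (hX : X.Infinite) : StrictMono (nthOrd X) := by
  refine strictMono_nat_of_lt_succ fun n => ?_
  induction n generalizing X with
  | zero =>
    have hmem : nthOrd X 1 ∈ X \ {leastIn X} :=
      (isLeast_leastIn (hX.sdiff (Set.finite_singleton _)).nonempty).1
    exact (leastIn_le hmem.1).lt_of_ne fun h => hmem.2 h.symm
  | succ n ih => exact ih (hX.sdiff (Set.finite_singleton _))

lemma nthOrd_image_Iio_succ (X : Set Ord2) (m : ℕ) :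
    nthOrd X '' Set.Iio (m + 1) =
      insert (leastIn X) (nthOrd (X \ {leastIn X}) '' Set.Iio m) := by
  ext x
  simp only [Set.mem_image, Set.mem_Iio, Set.mem_insert_iff]
  constructor
  · rintro ⟨_ | j, hj, rfl⟩
    · exact Or.inl rfl
    · exact Or.inr ⟨j, by omega, rfl⟩
  · rintro (rfl | ⟨j, hj, rfl⟩)
    · exact ⟨0, by omega, rfl⟩
    · exact ⟨j + 1, by omega, rfl⟩

lemma leastIn_diff_nthOrd_image (X : Set Ord2) (m : ℕ) :
    leastIn (X \ nthOrd X '' Set.Iio m) = nthOrd X m := by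
  induction m generalizing X with
  | zero => simp [nthOrd]
  | succ m ih =>
    rw [nthOrd_image_Iio_succ, ← Set.singleton_union, ← Set.sdiff_sdiff]
    exact ih _

lemma leastIn_range {e : ℕ → Ord2} (he : StrictMono e) : leastIn (Set.range e) = e 0 :=
  (isLeast_leastIn (Set.range_nonempty e)).unique
    ⟨⟨0, rfl⟩, Set.forall_mem_range.2 fun k => he.monotone k.zero_le⟩

lemma nthOrd_range {e : ℕ → Ord2} (he : StrictMono e) (i : ℕ) :
    nthOrd (Set.range e) i = e i := by
  induction i generalizing e with
  | zero => exact leastIn_range he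
  | succ i ih =>
    have htail : Set.range e \ {e 0} = Set.range fun j => e (j + 1) := by
      ext x
      simp only [Set.mem_sdiff, Set.mem_range, Set.mem_singleton_iff]
      constructor
      · rintro ⟨⟨_ | j, rfl⟩, hne⟩
        · exact absurd rfl hne
        · exact ⟨j, rfl⟩
      · rintro ⟨j, rfl⟩
        exact ⟨⟨j + 1, rfl⟩, (he j.succ_pos).ne'⟩
    change nthOrd (Set.range e \ {leastIn (Set.range e)}) i = e (i + 1)
    rw [leastIn_range he, htail]
    exact ih (he.comp (strictMono_id.add_const 1))

lemma exists_strictMono_extension (f : ℕ → Ord2) (n : ℕ) (hf : StrictMonoOn f (Set.Iio n)) :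
    ∃ e : ℕ → Ord2, StrictMono e ∧ ∀ i < n, e i = f i := by
  set C := (Finset.range n).sup (fun i => (ofLex (f i)).1) + 1
  have hbound : ∀ i < n, f i < toLex (C, 0) := fun i hi =>
    Prod.Lex.lt_iff.2 <| Or.inl <| Nat.lt_succ_of_le <|
      Finset.le_sup (f := fun i => (ofLex (f i)).1) (Finset.mem_range.2 hi)
  refine ⟨fun i => if i < n then f i else toLex (C + i, 0), ?_, fun i hi => if_pos hi⟩
  refine strictMono_nat_of_lt_succ fun i => ?_
  by_cases hi : i + 1 < n
  · simp only [if_pos hi, if_pos (i.lt_succ_self.trans hi)]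
    exact hf (i.lt_succ_self.trans hi) hi i.lt_succ_self
  · simp only [if_neg hi]
    split_ifs with hi'
    · exact (hbound i hi').trans_le (Prod.Lex.le_iff.2 (Or.inl (by simp)))
    · exact Prod.Lex.lt_iff.2 (Or.inl (by simp))

lemma On_stratify (X : Set Ord2) (φ : LEA) :
    (stratify X φ).On = nthOrd X '' Set.Iio φ.depth := by
  induction φ with
  | eq t u => simp [stratify, Formula.On, Formula.depth]
  | imp φ ψ ihφ ihψ =>
    simp only [stratify, Formula.On, Formula.depth, ihφ, ihψ, ← Set.image_union]
    congr 1
    ext k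
    simp
  | not φ ih => exact ih
  | all x φ ih => exact ih
  | op K φ ih =>
    simp only [stratify, Formula.On, Formula.depth, ih, leastIn_diff_nthOrd_image]
    rw [← Order.succ_eq_add_one, Order.Iio_succ_eq_insert, Set.image_insert_eq]

lemma stratify_eq_mapOps {X Y D : Set Ord2} {h : Ord2 → Ord2} {N : ℕ}
    (hh : ∀ i < N, nthOrd X i ∈ D ∧ h (nthOrd X i) = nthOrd Y i) (φ : LEA)
    (hφ : φ.depth ≤ N) : stratify Y φ = mapOps D h (stratify X φ) := by
  induction φ with
  | eq t u => rfl
  | imp φ ψ ihφ ihψ =>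
    simp only [stratify, mapOps, ihφ (le_of_max_le_left hφ), ihψ (le_of_max_le_right hφ)]
  | not φ ih => simp only [stratify, mapOps, ih hφ]
  | all x φ ih => simp only [stratify, mapOps, ih hφ]
  | op K φ ih =>
    have hlt : φ.depth < N := hφ
    simp only [stratify, mapOps]
    rw [On_stratify, On_stratify, leastIn_diff_nthOrd_image, leastIn_diff_nthOrd_image,
      if_pos (hh _ hlt).1, (hh _ hlt).2, ih hlt.le]

theorem oplus_uniform_general (T : Set LEA) : Uniform (oplus T) := by
  rintro D h hh _ ⟨φ, hφT, _, ⟨X, hX, rfl⟩, rfl⟩ hOn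
  have hmem : ∀ i < φ.depth, nthOrd X i ∈ D := fun i hi =>
    hOn (On_stratify X φ ▸ ⟨i, hi, rfl⟩)
  obtain ⟨e, he, hext⟩ := exists_strictMono_extension (h ∘ nthOrd X) φ.depth
    fun i hi j hj hij => hh _ (hmem i hi) _ (hmem j hj) (nthOrd_strictMono hX hij)
  refine ⟨φ, hφT, stratify (Set.range e), ⟨_, Set.infinite_range_of_injective he.injective, rfl⟩,
    ?_⟩
  refine (stratify_eq_mapOps (fun i hi => ⟨hmem i hi, ?_⟩) φ le_rfl).symm
  rw [nthOrd_range he, hext i hi, Function.comp_apply]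

/-- The uniformity lemma: for any `L_EA`-theory `T`, `T^⊕` is uniform. -/
theorem oplus_uniform (T : Set LEA) (hT : IsTheory T) : Uniform (oplus T) :=
  oplus_uniform_general T

end FCT
end
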